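/- For nonnegative integers a, b, c, the sum over k from -a to a of (-1)^k · C(a+b, a+k) · C(b+c, b+k) · C(c+a, c+k) equals (a+b+c)!/(a!·b!·c!). -/

import Mathlib

/-!
Both sides satisfy the recurrence `S(a+1,b+1,c+1) = S(a,b+1,c+1) + S(a+1,b,c+1) + S(a+1,b+1,c)`
and agree when one of `a, b, c` vanishes, where only the term `k = 0` of the sum survives.
For the sum, apply Pascal's rule `C(n+1,m+1) = C(n,m+1) + C(n,m)` to each of the three binomials
of the summand: six of the eight resulting products reassemble into the summands of the three
sums on the right, and the remaining two are `G(k) - G(k-1)` for the certificate `dixonCert`,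
which telescopes to zero.
-/

open Finset

/-- Binomial coefficient `C n k` for an integer `k`, equal to `0` when `k < 0`
(and automatically `0` when `k > n`). -/
def ichoose (n : ℕ) (k : ℤ) : ℕ := if 0 ≤ k then n.choose k.toNat else 0

theorem ichoose_of_neg {n : ℕ} {k : ℤ} (h : k < 0) : ichoose n k = 0 :=
  if_neg h.not_ge

theorem ichoose_of_lt {n : ℕ} {k : ℤ} (h : (n : ℤ) < k) : ichoose n k = 0 := by
  rw [ichoose, if_pos (by omega), Nat.choose_eq_zero_of_lt (by omega)]

theorem ichoose_natCast (n m : ℕ) : ichoose n m = n.choose m := by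
  simp [ichoose]

theorem ichoose_succ (n : ℕ) (k : ℤ) : ichoose (n + 1) k = ichoose n k + ichoose n (k - 1) := by
  rcases lt_trichotomy k 0 with hk | rfl | hk
  · rw [ichoose_of_neg hk, ichoose_of_neg hk, ichoose_of_neg (by omega)]
  · rw [ichoose_of_neg (by omega : (0 : ℤ) - 1 < 0)]
    simp [ichoose]
  · obtain ⟨j, rfl⟩ : ∃ j : ℕ, k = j + 1 := ⟨k.toNat - 1, by omega⟩
    rw [add_sub_cancel_right, ← Nat.cast_succ, ichoose_natCast, ichoose_natCast, ichoose_natCast,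
      Nat.choose_succ_succ', add_comm]

theorem Finset.sum_Icc_sub_sub_one {M : Type*} [AddCommGroup M] (g : ℤ → M) {m n : ℤ}
    (h : m ≤ n + 1) : ∑ k ∈ Icc m n, (g k - g (k - 1)) = g n - g (m - 1) := by
  obtain ⟨j, rfl⟩ : ∃ j : ℕ, n = m - 1 + j := ⟨(n - m + 1).toNat, by omega⟩
  induction j with
  | zero => simp
  | succ j ih =>
    rw [Nat.cast_succ, ← add_assoc, ← insert_Icc_right_eq_Icc_add_one (by omega),
      sum_insert (by simp), ih (by omega), add_sub_cancel_right]
    abel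

theorem eq_of_trinomial_recurrence {M : Type*} [Add M] {f g : ℕ → ℕ → ℕ → M}
    (hfg : ∀ a b c, (a = 0 ∨ b = 0 ∨ c = 0) → f a b c = g a b c)
    (hf : ∀ a b c, f (a + 1) (b + 1) (c + 1) =
      f a (b + 1) (c + 1) + f (a + 1) b (c + 1) + f (a + 1) (b + 1) c)
    (hg : ∀ a b c, g (a + 1) (b + 1) (c + 1) =
      g a (b + 1) (c + 1) + g (a + 1) b (c + 1) + g (a + 1) (b + 1) c)
    (a b c : ℕ) : f a b c = g a b c := by
  induction hn : a + b + c using Nat.strong_induction_on generalizing a b c with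
  | _ n ih =>
    match a, b, c with
    | 0, _, _ | _ + 1, 0, _ | _ + 1, _ + 1, 0 => exact hfg _ _ _ (by simp)
    | a + 1, b + 1, c + 1 =>
      rw [hf, hg, ih _ (by omega) a (b + 1) (c + 1) rfl, ih _ (by omega) (a + 1) b (c + 1) rfl,
        ih _ (by omega) (a + 1) (b + 1) c rfl]

def dixonTerm (a b c : ℕ) (k : ℤ) : ℚ :=
  (-1 : ℚ) ^ k * (ichoose (a + b) (a + k) : ℚ) * (ichoose (b + c) (b + k) : ℚ) *
    (ichoose (c + a) (c + k) : ℚ)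

def dixonCert (a b c : ℕ) (k : ℤ) : ℚ :=
  (-1 : ℚ) ^ k * (ichoose (a + b + 1) (a + 1 + k) : ℚ) *
    (ichoose (b + c + 1) (b + 1 + k) : ℚ) * (ichoose (c + a + 1) (c + 1 + k) : ℚ)

theorem dixonTerm_succ_succ_succ (a b c : ℕ) (k : ℤ) :
    dixonTerm (a + 1) (b + 1) (c + 1) k =
      dixonTerm a (b + 1) (c + 1) k + dixonTerm (a + 1) b (c + 1) k +
        dixonTerm (a + 1) (b + 1) c k + (dixonCert a b c k - dixonCert a b c (k - 1)) := by
  have pascal (n : ℕ) (j k : ℤ) :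
      (ichoose (n + 1) (j + 1 + k) : ℚ) = ichoose n (j + 1 + k) + ichoose n (j + k) := by
    rw [ichoose_succ, Nat.cast_add, add_right_comm, add_sub_cancel_right]
  simp only [dixonTerm, dixonCert, Nat.cast_add, Nat.cast_one, add_add_sub_cancel, ← add_assoc,
    add_right_comm _ 1]
  rw [pascal (a + b + 1), pascal (b + c + 1), pascal (c + a + 1),
    zpow_sub_one₀ (by norm_num : (-1 : ℚ) ≠ 0)]
  ring

theorem dixonTerm_eq_zero_of_notMem {a b c : ℕ} {k : ℤ} (hk : k ∉ Icc (-(a : ℤ)) a) :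
    dixonTerm a b c k = 0 := by
  rw [mem_Icc, not_and_or, not_le, not_le] at hk
  rcases hk with hk | hk
  · simp [dixonTerm, ichoose_of_neg (by omega : (a : ℤ) + k < 0)]
  · simp [dixonTerm, ichoose_of_lt (by push_cast; omega : ((c + a : ℕ) : ℤ) < c + k)]

theorem dixonCert_eq_zero_of_lt {a b c : ℕ} {k : ℤ} (hk : k < -(a : ℤ) - 1) :
    dixonCert a b c k = 0 := by
  simp [dixonCert, ichoose_of_neg (by omega : (a : ℤ) + 1 + k < 0)]

theorem dixonCert_eq_zero_of_gt {a b c : ℕ} {k : ℤ} (hk : (a : ℤ) < k) :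
    dixonCert a b c k = 0 := by
  simp [dixonCert, ichoose_of_lt (by push_cast; omega : ((c + a + 1 : ℕ) : ℤ) < c + 1 + k)]

noncomputable def dixonSum (a b c : ℕ) : ℚ :=
  ∑ k ∈ Icc (-(a : ℤ)) a, dixonTerm a b c k

theorem dixonSum_eq_sum_Icc {a b c N : ℕ} (hN : a ≤ N) :
    dixonSum a b c = ∑ k ∈ Icc (-(N : ℤ)) N, dixonTerm a b c k :=
  sum_subset (Icc_subset_Icc (by omega) (by omega)) fun _ _ hk => dixonTerm_eq_zero_of_notMem hk

theorem dixonSum_succ_succ_succ (a b c : ℕ) :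
    dixonSum (a + 1) (b + 1) (c + 1) =
      dixonSum a (b + 1) (c + 1) + dixonSum (a + 1) b (c + 1) + dixonSum (a + 1) (b + 1) c := by
  have telescope : ∑ k ∈ Icc (-((a + 1 : ℕ) : ℤ)) (a + 1 : ℕ),
      (dixonCert a b c k - dixonCert a b c (k - 1)) = 0 := by
    rw [sum_Icc_sub_sub_one _ (by omega), dixonCert_eq_zero_of_gt (by omega),
      dixonCert_eq_zero_of_lt (by omega), sub_zero]
  rw [dixonSum_eq_sum_Icc (Nat.le_succ a), dixonSum_eq_sum_Icc le_rfl, dixonSum_eq_sum_Icc le_rfl,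
    dixonSum, ← sum_add_distrib, ← sum_add_distrib, ← add_zero (∑ _ ∈ _, (_ + _ + _)),
    ← telescope, ← sum_add_distrib]
  exact sum_congr rfl fun k _ => dixonTerm_succ_succ_succ a b c k

theorem dixonTerm_eq_zero_of_ne_zero {a b c : ℕ} {k : ℤ} (habc : a = 0 ∨ b = 0 ∨ c = 0)
    (hk : k ≠ 0) : dixonTerm a b c k = 0 := by
  rcases hk.lt_or_gt with hk | hk <;> rcases habc with rfl | rfl | rfl
  all_goals simp [dixonTerm, ichoose_of_neg, ichoose_of_lt, hk]

def trinomial (a b c : ℕ) : ℚ :=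
  ((a + b + c).factorial : ℚ) / ((a.factorial : ℚ) * (b.factorial : ℚ) * (c.factorial : ℚ))

theorem trinomial_succ_succ_succ (a b c : ℕ) :
    trinomial (a + 1) (b + 1) (c + 1) =
      trinomial a (b + 1) (c + 1) + trinomial (a + 1) b (c + 1) + trinomial (a + 1) (b + 1) c := by
  simp only [trinomial, show a + 1 + (b + 1) + (c + 1) = a + b + c + 2 + 1 by ring,
    show a + (b + 1) + (c + 1) = a + b + c + 2 by ring,
    show a + 1 + b + (c + 1) = a + b + c + 2 by ring,
    show a + 1 + (b + 1) + c = a + b + c + 2 by ring, Nat.factorial_succ]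
  push_cast
  field_simp
  ring

theorem trinomial_of_eq_zero {a b c : ℕ} (habc : a = 0 ∨ b = 0 ∨ c = 0) :
    trinomial a b c = ((a + b).choose a * (b + c).choose b * (c + a).choose c : ℕ) := by
  rcases habc with rfl | rfl | rfl <;> simp [trinomial, Nat.cast_add_choose]
  rw [add_comm a c, mul_comm]

theorem dixonSum_of_eq_zero {a b c : ℕ} (habc : a = 0 ∨ b = 0 ∨ c = 0) :
    dixonSum a b c = trinomial a b c := by
  rw [dixonSum, sum_eq_single_of_mem 0 (by simp) fun k _ => dixonTerm_eq_zero_of_ne_zero habc,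
    trinomial_of_eq_zero habc]
  simp [dixonTerm, ichoose_natCast]

theorem dixon_generalized (a b c : ℕ) :
    ∑ k ∈ Finset.Icc (-(a : ℤ)) (a : ℤ),
      (-1 : ℚ) ^ k * (ichoose (a + b) (a + k) : ℚ) * (ichoose (b + c) (b + k) : ℚ) *
        (ichoose (c + a) (c + k) : ℚ)
      = ((a + b + c).factorial : ℚ) /
          ((a.factorial : ℚ) * (b.factorial : ℚ) * (c.factorial : ℚ)) := by
  show dixonSum a b c = trinomial a b c
  exact eq_of_trinomial_recurrence (fun _ _ _ => dixonSum_of_eq_zero) dixonSum_succ_succ_succ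
    trinomial_succ_succ_succ a b c
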